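/- arXiv:1805.12297 — 6 statements merged into one kernel-verified Lean document; each statement's English description precedes it below -/
import Mathlib

section
/- Let Φ be a root system with simple roots S and positive roots Φ⁺, γ ∈ S a cominuscule simple root, and w an element of the Weyl group such that w(α) > 0 for every simple root α ≠ γ. Define R = {α ∈ Φ : α ≥ γ and w(α) > 0}. Then for every α ∈ R and every simple root β with α + β ∈ Φ, we have α + β ∈ R. -/
/-!
Adding a simple root `β` to `α ∈ R` keeps the root positive, and `β ≠ γ`, since otherwise
`α + β` would have coefficient `2` at the cominuscule root `γ`. Hence `β` is one of the simple
roots that `w` sends to positive roots, and `w (α + β) = w α + w β` is positive as well.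
-/

namespace Finsupp

variable {ι M : Type*}

theorem zero_lt_iff_forall_nonneg_and_ne_zero [Zero M] [PartialOrder M] {f : ι →₀ M} :
    0 < f ↔ (∀ i, 0 ≤ f i) ∧ f ≠ 0 := by
  rw [lt_iff_le_and_ne, le_def, ne_comm]
  rfl

end Finsupp

open Finsupp

theorem stmt1_general {ι : Type*} (Φ : Set (ι →₀ ℤ)) (γ : ι)
    (hcomin : ∀ α ∈ Φ, (∀ i, 0 ≤ α i) → α γ ≤ 1)
    (w : (ι →₀ ℤ) →ₗ[ℤ] (ι →₀ ℤ))
    (hw : ∀ β : ι, β ≠ γ →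
      (∀ i, 0 ≤ (w (Finsupp.single β 1)) i) ∧ w (Finsupp.single β 1) ≠ 0)
    (R : Set (ι →₀ ℤ))
    (hR : R = {α ∈ Φ | (∀ i, 0 ≤ α i) ∧ 1 ≤ α γ ∧ (∀ i, 0 ≤ (w α) i) ∧ w α ≠ 0})
    (α : ι →₀ ℤ) (hα : α ∈ R) (β : ι)
    (hβroot : α + Finsupp.single β 1 ∈ Φ) :
    α + Finsupp.single β 1 ∈ R := by
  subst hR
  obtain ⟨-, hpos, hγ, hwα⟩ := hα
  have hsum_nonneg : 0 ≤ α + single β 1 :=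
    add_nonneg (le_def.2 hpos) (single_nonneg.2 zero_le_one)
  have hβγ : β ≠ γ := by
    rintro rfl
    have := hcomin _ hβroot (le_def.1 hsum_nonneg)
    simp only [coe_add, Pi.add_apply, single_eq_same] at this
    omega
  have hwβ : 0 < w (single β 1) := zero_lt_iff_forall_nonneg_and_ne_zero.2 (hw β hβγ)
  refine ⟨hβroot, le_def.1 hsum_nonneg, by simpa [single_apply, hβγ] using hγ, ?_⟩
  rw [← zero_lt_iff_forall_nonneg_and_ne_zero, map_add]
  exact add_pos_of_pos_of_nonneg (zero_lt_iff_forall_nonneg_and_ne_zero.2 hwα) hwβ.le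

/-- Roots are written as finitely supported integer vectors in the
basis of simple roots `ι`; a root is positive iff all its coefficients are
nonnegative (and it is nonzero).  `γ` is a cominuscule simple root: every
positive root has coefficient at most `1` at `γ`.  The Weyl group element `w`
acts linearly on the root lattice and sends every simple root `β ≠ γ` to a
positive root.  Let `R = {α ∈ Φ : α ≥ γ and w(α) > 0}`, where `α ≥ γ` means
`α` is positive with coefficient at least `1` at `γ`.  Then for `α ∈ R` and a
simple root `β`, if `α + β ∈ Φ` then `α + β ∈ R`. -/
theorem stmt1 {ι : Type*} [DecidableEq ι] (Φ : Set (ι →₀ ℤ)) (γ : ι)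
    (hcomin : ∀ α ∈ Φ, (∀ i, 0 ≤ α i) → α γ ≤ 1)
    (w : (ι →₀ ℤ) →ₗ[ℤ] (ι →₀ ℤ))
    (hw : ∀ β : ι, β ≠ γ →
      (∀ i, 0 ≤ (w (Finsupp.single β 1)) i) ∧ w (Finsupp.single β 1) ≠ 0)
    (R : Set (ι →₀ ℤ))
    (hR : R = {α ∈ Φ | (∀ i, 0 ≤ α i) ∧ 1 ≤ α γ ∧ (∀ i, 0 ≤ (w α) i) ∧ w α ≠ 0})
    (α : ι →₀ ℤ) (hα : α ∈ R) (β : ι)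
    (hβroot : α + Finsupp.single β 1 ∈ Φ) :
    α + Finsupp.single β 1 ∈ R :=
  stmt1_general Φ γ hcomin w hw R hR α hα β hβroot
end

section
/- Let w be a permutation of {1,...,n} with 0 ≤ k ≤ d ≤ n such that w(1) > w(2) > ⋯ > w(d). Then for all 1 ≤ i ≤ n, m_w(i,k) = max(0, m_w(i,d) - (d - k)), where m_w(i,j) = #{t ≤ j : w(t) ≤ i}. -/
/-!
Because `w` is decreasing on the first `d` positions, the positions `t < d` with `w t < i` form a
final segment `[m, d)` of `[0, d)`. Counting its elements below `k` and below `d` gives `k - m`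
and `d - m`, whose difference is `d - k` unless the first count is cut off at `0`.
-/

/-- `mw w i j = #{k ≤ j : w(k) ≤ i}` (positions and values are 0-indexed). -/
def mw {n : ℕ} (w : Equiv.Perm (Fin n)) (i j : ℕ) : ℕ :=
  (Finset.univ.filter (fun k : Fin n => (k : ℕ) < j ∧ ((w k : ℕ)) < i)).card

open Finset

section FinalSegment

variable {P : ℕ → Prop} {d : ℕ}

lemma exists_threshold_of_upward_closed (hP : ∀ a b, a ≤ b → b < d → P a → P b) :
    ∃ m ≤ d, ∀ t < d, P t ↔ m ≤ t := by
  classical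
  have hex : ∃ m, ∀ t, m ≤ t → t < d → P t := ⟨d, fun t hdt htd => absurd htd (by omega)⟩
  refine ⟨Nat.find hex, Nat.find_min' hex fun t hdt htd => absurd htd (by omega), fun t ht => ?_⟩
  exact ⟨fun hPt => Nat.find_min' hex fun s hts hsd => hP t s hts hsd hPt,
    fun hmt => Nat.find_spec hex t hmt ht⟩

variable [DecidablePred P]

lemma card_filter_range_of_threshold {m j : ℕ} (h : ∀ t < d, P t ↔ m ≤ t) (hj : j ≤ d) :
    #((range j).filter P) = j - m := by
  have : (range j).filter P = Ico m j := by
    ext t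
    simp only [mem_filter, mem_range, mem_Ico]
    constructor
    · rintro ⟨htj, hPt⟩
      exact ⟨(h t (by omega)).1 hPt, htj⟩
    · rintro ⟨hmt, htj⟩
      exact ⟨htj, (h t (by omega)).2 hmt⟩
  rw [this, Nat.card_Ico]

theorem card_filter_range_eq_sub_of_upward_closed {k : ℕ}
    (hP : ∀ a b, a ≤ b → b < d → P a → P b) (hkd : k ≤ d) :
    #((range k).filter P) = #((range d).filter P) - (d - k) := by
  obtain ⟨m, hmd, hm⟩ := exists_threshold_of_upward_closed hP
  rw [card_filter_range_of_threshold hm hkd, card_filter_range_of_threshold hm le_rfl]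
  omega

end FinalSegment

lemma mw_eq_card_filter_range {n : ℕ} (w : Equiv.Perm (Fin n)) (i j : ℕ) :
    mw w i j = #((range j).filter fun t => ∃ h : t < n, (w ⟨t, h⟩ : ℕ) < i) := by
  rw [mw, ← card_map Fin.valEmbedding]
  congr 1
  ext t
  simp only [mem_map, mem_filter, mem_univ, true_and, Fin.valEmbedding_apply, mem_range]
  constructor
  · rintro ⟨s, ⟨hsj, hws⟩, rfl⟩
    exact ⟨hsj, s.isLt, hws⟩
  · rintro ⟨htj, htn, hwt⟩
    exact ⟨⟨t, htn⟩, ⟨htj, hwt⟩, rfl⟩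

/-- if `w(1) > w(2) > ⋯ > w(d)` (0-indexed: `w` is strictly
decreasing on the first `d` positions) and `0 ≤ k ≤ d ≤ n`, then for all
`1 ≤ i ≤ n`, `m_w(i,k) = max(0, m_w(i,d) - (d - k))`. -/
theorem stmt3 {n : ℕ} (w : Equiv.Perm (Fin n)) (k d : ℕ)
    (hkd : k ≤ d) (hdn : d ≤ n)
    (hdec : ∀ a b : Fin n, (a : ℕ) < (b : ℕ) → (b : ℕ) < d → (w b : ℕ) < (w a : ℕ)) :
    ∀ i, 1 ≤ i → i ≤ n →
      (mw w i k : ℤ) = max 0 ((mw w i d : ℤ) - ((d : ℤ) - (k : ℤ))) := by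
  intro i _ _
  have hupward : ∀ a b, a ≤ b → b < d →
      (∃ h : a < n, (w ⟨a, h⟩ : ℕ) < i) → ∃ h : b < n, (w ⟨b, h⟩ : ℕ) < i := by
    rintro a b hab hbd ⟨han, hwa⟩
    refine ⟨by omega, ?_⟩
    rcases hab.eq_or_lt with rfl | hab
    · exact hwa
    · exact (hdec ⟨a, han⟩ ⟨b, by omega⟩ hab hbd).trans hwa
  rw [mw_eq_card_filter_range, mw_eq_card_filter_range,
    card_filter_range_eq_sub_of_upward_closed hupward hkd]
  omega
end

section
/- Let E(n) be an n-dimensional vector space with standard flag (E(i)). Let w ∈ S_n satisfy w(1) > ⋯ > w(d), let 0 ≤ k ≤ d ≤ n, and let U be a k-dimensional subspace with dim(U ∩ E(i)) ≥ m_w(i,d) − (d − k) for all 1 ≤ i ≤ n. Then dim(U ∩ E(i)) ≥ m_w(i,k) for all 1 ≤ i ≤ n. -/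
/-!
Since `w` is decreasing on the first `d` positions, as soon as one position `t < k` has
`w t < i`, every position in `[k, d)` has a smaller value and so is counted by `m_w(i, d)`.
Hence either `m_w(i, k) = 0` or `m_w(i, k) + (d - k) ≤ m_w(i, d)`, and the hypothesis on `U`
gives the claim in both cases.
-/

/-- The standard flag: `stdFlag K n i` is the subspace of `Fin n → K`
spanned by the first `i` standard basis vectors, i.e. vectors supported on
coordinates `< i`. -/
def stdFlag (K : Type*) [Field K] (n i : ℕ) : Submodule K (Fin n → K) where
  carrier := {x | ∀ j : Fin n, i ≤ (j : ℕ) → x j = 0}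
  add_mem' := by
    intro a b ha hb j hj
    simp [Pi.add_apply, ha j hj, hb j hj]
  zero_mem' := by intro j hj; rfl
  smul_mem' := by
    intro c a ha j hj
    simp [Pi.smul_apply, ha j hj]

theorem Fin.card_filter_le_and_lt {n : ℕ} (k d : ℕ) (hdn : d ≤ n) :
    (Finset.univ.filter (fun t : Fin n => k ≤ (t : ℕ) ∧ (t : ℕ) < d)).card = d - k := by
  have hIco : Finset.univ.filter (fun t : Fin n => k ≤ (t : ℕ) ∧ (t : ℕ) < d) =
      (Finset.Ico k d).attachFin (fun m hm => (Finset.mem_Ico.mp hm).2.trans_le hdn) := by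
    ext t
    simp [Finset.mem_attachFin]
  rw [hIco, Finset.card_attachFin, Nat.card_Ico]

theorem mw_add_sub_le_mw {n : ℕ} {w : Equiv.Perm (Fin n)} {i k d : ℕ} (hkd : k ≤ d)
    (hdn : d ≤ n) (hdec : ∀ a b : Fin n, (a : ℕ) < b → (b : ℕ) < d → (w b : ℕ) < w a)
    (hk : mw w i k ≠ 0) : mw w i k + (d - k) ≤ mw w i d := by
  obtain ⟨t₀, ht₀⟩ := Finset.card_ne_zero.mp hk
  simp only [Finset.mem_filter, Finset.mem_univ, true_and] at ht₀
  set A := Finset.univ.filter (fun t : Fin n => (t : ℕ) < k ∧ (w t : ℕ) < i)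
  set B := Finset.univ.filter (fun t : Fin n => k ≤ (t : ℕ) ∧ (t : ℕ) < d)
  have hAB : Disjoint A B := by
    simp only [A, B, Finset.disjoint_left, Finset.mem_filter, Finset.mem_univ, true_and]
    omega
  have hsub : A ∪ B ⊆ Finset.univ.filter (fun t : Fin n => (t : ℕ) < d ∧ (w t : ℕ) < i) := by
    intro t ht
    simp only [A, B, Finset.mem_union, Finset.mem_filter, Finset.mem_univ, true_and] at ht ⊢
    rcases ht with ⟨htk, hti⟩ | ⟨hkt, htd⟩
    · exact ⟨htk.trans_le hkd, hti⟩
    · exact ⟨htd, (hdec t₀ t (ht₀.1.trans_le hkt) htd).trans ht₀.2⟩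
  calc mw w i k + (d - k) = (A ∪ B).card := by
        rw [Finset.card_union_of_disjoint hAB, Fin.card_filter_le_and_lt k d hdn]; rfl
    _ ≤ mw w i d := Finset.card_le_card hsub

theorem stmt5_general {K : Type*} [Field K] {n : ℕ} (w : Equiv.Perm (Fin n))
    (k d : ℕ) (hkd : k ≤ d) (hdn : d ≤ n)
    (hdec : ∀ a b : Fin n, (a : ℕ) < (b : ℕ) → (b : ℕ) < d → (w b : ℕ) < (w a : ℕ))
    (U : Submodule K (Fin n → K))
    (hineq : ∀ i, 1 ≤ i → i ≤ n →
      (mw w i d : ℤ) - ((d : ℤ) - (k : ℤ))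
        ≤ (Module.finrank K ↥(U ⊓ stdFlag K n i) : ℤ)) :
    ∀ i, 1 ≤ i → i ≤ n →
      mw w i k ≤ Module.finrank K ↥(U ⊓ stdFlag K n i) := by
  intro i h1 h2
  rcases eq_or_ne (mw w i k) 0 with h0 | h0
  · simp [h0]
  · have hcount := mw_add_sub_le_mw hkd hdn hdec h0
    have hdim := hineq i h1 h2
    omega

/-- if `w(1) > ⋯ > w(d)` (0-indexed: strictly decreasing on the
first `d` positions), `0 ≤ k ≤ d ≤ n`, and `U` is a `k`-dimensional subspace
with `dim(U ∩ E(i)) ≥ m_w(i,d) − (d − k)` for all `1 ≤ i ≤ n`, then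
`dim(U ∩ E(i)) ≥ m_w(i,k)` for all `1 ≤ i ≤ n`. -/
theorem stmt5 {K : Type*} [Field K] {n : ℕ} (w : Equiv.Perm (Fin n))
    (k d : ℕ) (hkd : k ≤ d) (hdn : d ≤ n)
    (hdec : ∀ a b : Fin n, (a : ℕ) < (b : ℕ) → (b : ℕ) < d → (w b : ℕ) < (w a : ℕ))
    (U : Submodule K (Fin n → K)) (hU : Module.finrank K U = k)
    (hineq : ∀ i, 1 ≤ i → i ≤ n →
      (mw w i d : ℤ) - ((d : ℤ) - (k : ℤ))
        ≤ (Module.finrank K ↥(U ⊓ stdFlag K n i) : ℤ)) :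
    ∀ i, 1 ≤ i → i ≤ n →
      mw w i k ≤ Module.finrank K ↥(U ⊓ stdFlag K n i) :=
  stmt5_general w k d hkd hdn hdec U hineq
end

section
/- Let E(n) be an n-dimensional vector space over an algebraically closed field with standard flag (E(i)), let 0 ≤ k ≤ d ≤ n, let w ∈ S_n satisfy w(k+1) > w(k+2) > ⋯ > w(n), and let U be a d-dimensional subspace of E(n). Then dim(U ∩ E(i)) ≥ m_w(i,d) for all 1 ≤ i ≤ n if and only if dim(U ∩ E(i)) ≥ m_w(i,k) for all 1 ≤ i ≤ n. -/
/-! The forward implication is monotonicity of `m_w(i, ·)`. Conversely, fix `i`. If no position in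
`[k, d)` has `w`-value `< i`, then `m_w(i, d) ≤ m_w(i, k)`. Otherwise, since `w` decreases from
position `k` on, all `n - d` positions `≥ d` have value `< i` as well, so `m_w(i, d) ≤ i - (n - d)`;
and `dim (U ∩ E(i)) ≥ d + i - n` holds for every `d`-dimensional `U` by the dimension formula. -/

open Finset

theorem Submodule.finrank_add_finrank_le_finrank_add_finrank_inf {K V : Type*} [DivisionRing K]
    [AddCommGroup V] [Module K V] [FiniteDimensional K V] (s t : Submodule K V) :
    Module.finrank K s + Module.finrank K t ≤ Module.finrank K V + Module.finrank K ↥(s ⊓ t) := by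
  rw [← Submodule.finrank_sup_add_finrank_inf_eq]
  exact Nat.add_le_add_right (Submodule.finrank_le _) _

lemma Fin.card_filter_le_val (n i : ℕ) : #{j : Fin n | i ≤ (j : ℕ)} = n - i := by
  have := Finset.card_filter_add_card_filter_not (s := (univ : Finset (Fin n)))
    (fun j : Fin n => (j : ℕ) < i)
  simp only [Fin.card_filter_val_lt, not_lt, card_univ, Fintype.card_fin] at this
  omega

lemma stdFlag_eq_ker (K : Type*) [Field K] (n i : ℕ) :
    stdFlag K n i =
      LinearMap.ker (LinearMap.funLeft K K (Subtype.val : {j : Fin n // i ≤ (j : ℕ)} → Fin n)) := by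
  ext x
  simp [stdFlag, funext_iff, LinearMap.funLeft]

lemma finrank_stdFlag (K : Type*) [Field K] (n i : ℕ) :
    Module.finrank K (stdFlag K n i) = min n i := by
  have h := LinearMap.finrank_range_add_finrank_ker
    (LinearMap.funLeft K K (Subtype.val : {j : Fin n // i ≤ (j : ℕ)} → Fin n))
  rw [LinearMap.range_eq_top.mpr
      (LinearMap.funLeft_surjective_of_injective _ _ _ Subtype.val_injective), ← stdFlag_eq_ker,
    finrank_top, Module.finrank_fin_fun, Module.finrank_pi, Fintype.card_subtype,
    Fin.card_filter_le_val] at h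
  omega

section mw

variable {n : ℕ} (w : Equiv.Perm (Fin n))

lemma mw_mono (i : ℕ) : Monotone (mw w i) := fun _ _ hjj' =>
  card_le_card fun _ ht => by
    simp only [mem_filter, mem_univ, true_and] at ht ⊢; omega

lemma card_filter_perm_val_lt (i : ℕ) : #{t : Fin n | (w t : ℕ) < i} = min n i := by
  rw [← Fin.card_filter_val_lt, ← card_map w.toEmbedding, map_filter]
  simp

lemma mw_add_sub_le {k d i : ℕ}
    (hdec : ∀ a b : Fin n, (a : ℕ) < (b : ℕ) → k ≤ (a : ℕ) → (w b : ℕ) < (w a : ℕ))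
    {t : Fin n} (hkt : k ≤ (t : ℕ)) (htd : (t : ℕ) < d) (hti : (w t : ℕ) < i) :
    mw w i d + (n - d) ≤ min n i := by
  have htail : ∀ s : Fin n, d ≤ (s : ℕ) → (w s : ℕ) < i := fun s hs =>
    (hdec t s (by omega) hkt).trans hti
  rw [← Fin.card_filter_le_val, ← card_filter_perm_val_lt, mw, ← card_union_of_disjoint]
  · exact card_le_card fun s hs => by
      simp only [mem_union, mem_filter, mem_univ, true_and] at hs ⊢
      exact hs.elim And.right (htail s)
  · exact disjoint_filter.mpr fun s _ hs => by omega

lemma mw_le_mw_of_forall_le {k d i : ℕ}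
    (hgap : ∀ t : Fin n, k ≤ (t : ℕ) → (t : ℕ) < d → i ≤ (w t : ℕ)) :
    mw w i d ≤ mw w i k :=
  card_le_card fun t ht => by
    simp only [mem_filter, mem_univ, true_and] at ht ⊢
    exact ⟨by_contra fun h => (hgap t (by omega) ht.1).not_gt ht.2, ht.2⟩

end mw

theorem stmt6_general {K : Type*} [Field K] {n : ℕ}
    (w : Equiv.Perm (Fin n)) (k d : ℕ) (hkd : k ≤ d) (hdn : d ≤ n)
    (hdec : ∀ a b : Fin n, (a : ℕ) < (b : ℕ) → k ≤ (a : ℕ) → (w b : ℕ) < (w a : ℕ))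
    (U : Submodule K (Fin n → K)) (hU : Module.finrank K U = d) :
    (∀ i, 1 ≤ i → i ≤ n → mw w i d ≤ Module.finrank K ↥(U ⊓ stdFlag K n i)) ↔
    (∀ i, 1 ≤ i → i ≤ n → mw w i k ≤ Module.finrank K ↥(U ⊓ stdFlag K n i)) := by
  refine ⟨fun h i hi hin => (mw_mono w i hkd).trans (h i hi hin), fun h i hi hin => ?_⟩
  by_cases hjump : ∃ t : Fin n, k ≤ (t : ℕ) ∧ (t : ℕ) < d ∧ (w t : ℕ) < i
  · obtain ⟨t, hkt, htd, hti⟩ := hjump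
    have hmw := mw_add_sub_le w hdec hkt htd hti
    have hdim := Submodule.finrank_add_finrank_le_finrank_add_finrank_inf U (stdFlag K n i)
    rw [hU, finrank_stdFlag, Module.finrank_fin_fun] at hdim
    omega
  · push Not at hjump
    exact (mw_le_mw_of_forall_le w hjump).trans (h i hi hin)

/-- over an algebraically closed field, if `0 ≤ k ≤ d ≤ n`,
`w(k+1) > w(k+2) > ⋯ > w(n)` (0-indexed: strictly decreasing on positions
`≥ k`), and `U` is a `d`-dimensional subspace, then
`dim(U ∩ E(i)) ≥ m_w(i,d)` for all `1 ≤ i ≤ n` iff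
`dim(U ∩ E(i)) ≥ m_w(i,k)` for all `1 ≤ i ≤ n`. -/
theorem stmt6 {K : Type*} [Field K] [IsAlgClosed K] {n : ℕ}
    (w : Equiv.Perm (Fin n)) (k d : ℕ) (hkd : k ≤ d) (hdn : d ≤ n)
    (hdec : ∀ a b : Fin n, (a : ℕ) < (b : ℕ) → k ≤ (a : ℕ) → (w b : ℕ) < (w a : ℕ))
    (U : Submodule K (Fin n → K)) (hU : Module.finrank K U = d) :
    (∀ i, 1 ≤ i → i ≤ n → mw w i d ≤ Module.finrank K ↥(U ⊓ stdFlag K n i)) ↔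
    (∀ i, 1 ≤ i → i ≤ n → mw w i k ≤ Module.finrank K ↥(U ⊓ stdFlag K n i)) :=
  stmt6_general w k d hkd hdn hdec U hU
end

section
/- Let E(n) be an n-dimensional vector space over a field with standard flag E(1) ⊂ ⋯ ⊂ E(n), and let x : E(n) → E(n) be a linear map. Fix integers 0 = t_0 < t_1 < ⋯ < t_l ≤ n and subspaces F_0 ⊂ F_1 ⊂ ⋯ ⊂ F_{2l+1} = E(n) with the properties: F_i ⊆ E(t_i) for 1 ≤ i ≤ l, dim F_{i−1} ≤ r_{i−1}, dim(F_{i−1} ∩ E(t_j)) ≥ min(r_{i−1}, r_j) for all j, and x F_{i+l} ⊆ F_{i−1} for all 1 ≤ i ≤ l+1, where r_1 ≤ ⋯ ≤ r_l are given integers with dim F_i = r_i for i ≤ l. Then for all 1 ≤ j < i ≤ l: dim(x E(t_i) mod E(t_j)) ≤ r_{i−1} − r_j, where x E(t_i) mod E(t_j) denotes the image of x E(t_i) in E(n)/E(t_j). -/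
theorem Submodule.finrank_map_add_finrank_inf_ker {K V W : Type*} [DivisionRing K]
    [AddCommGroup V] [Module K V] [AddCommGroup W] [Module K W]
    (p : Submodule K V) [FiniteDimensional K p] (f : V →ₗ[K] W) :
    Module.finrank K (p.map f) + Module.finrank K ↥(p ⊓ LinearMap.ker f) =
      Module.finrank K p := by
  have h := LinearMap.finrank_range_add_finrank_ker (f.comp p.subtype)
  rwa [LinearMap.range_comp, Submodule.range_subtype, LinearMap.ker_comp,
    ← Submodule.finrank_map_subtype_eq, Submodule.map_comap_subtype] at h

theorem stmt12_general {K : Type*} [Field K] {n l : ℕ} (t r : ℕ → ℕ)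
    (x : (Fin n → K) →ₗ[K] (Fin n → K))
    (F : ℕ → Submodule K (Fin n → K))
    (hEF : ∀ i, 1 ≤ i → i ≤ l → stdFlag K n (t i) ≤ F (i + l))
    (hdimF : ∀ i, i ≤ l → Module.finrank K (F i) = r i)
    (hrmono : ∀ i j, i ≤ j → j ≤ l → r i ≤ r j)
    (hint : ∀ i j, 1 ≤ i → i ≤ l + 1 → 1 ≤ j → j ≤ l →
      min (r (i - 1)) (r j) ≤ Module.finrank K ↥(F (i - 1) ⊓ stdFlag K n (t j)))
    (hx : ∀ i, 1 ≤ i → i ≤ l + 1 → Submodule.map x (F (i + l)) ≤ F (i - 1)) :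
    ∀ i j, 1 ≤ j → j < i → i ≤ l →
      (Module.finrank K ↥(Submodule.map (stdFlag K n (t j)).mkQ
          (Submodule.map x (stdFlag K n (t i)))) : ℤ)
        ≤ (r (i - 1) : ℤ) - (r j : ℤ) := by
  intro i j hj hji hil
  set E := stdFlag K n
  have hxE : (E (t i)).map x ≤ F (i - 1) :=
    (Submodule.map_mono (hEF i (by omega) hil)).trans (hx i (by omega) (by omega))
  have himage := Submodule.finrank_mono (Submodule.map_mono (f := (E (t j)).mkQ) hxE)
  have hrank := (F (i - 1)).finrank_map_add_finrank_inf_ker (E (t j)).mkQ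
  rw [Submodule.ker_mkQ, hdimF (i - 1) (by omega)] at hrank
  have hmeet := hint i j (by omega) (by omega) hj (by omega)
  rw [min_eq_right (hrmono j (i - 1) (by omega) (by omega))] at hmeet
  omega

/-- 'row' inequality of Proposition eqrc: given the chain
`F_0 ⊆ ⋯ ⊆ F_{2l+1} = E(n)` with `F_i ⊆ E(t_i)` and `E(t_i) ⊆ F_{i+l}` for
`1 ≤ i ≤ l`, `dim F_i = r_i` for `i ≤ l`, the Schubert-type intersection
bounds `dim(F_{i−1} ∩ E(t_j)) ≥ min(r_{i−1}, r_j)`, and `x F_{i+l} ⊆ F_{i−1}`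
for `1 ≤ i ≤ l+1`, one has for all `1 ≤ j < i ≤ l`:
`dim((x E(t_i) + E(t_j))/E(t_j)) ≤ r_{i−1} − r_j`. -/
theorem stmt12 {K : Type*} [Field K] {n l : ℕ} (t r : ℕ → ℕ)
    (x : (Fin n → K) →ₗ[K] (Fin n → K))
    (F : ℕ → Submodule K (Fin n → K))
    (ht0 : t 0 = 0)
    (htmono : ∀ i j, i < j → j ≤ l → t i < t j)
    (htn : t l ≤ n)
    (hchain : ∀ i j, i ≤ j → j ≤ 2 * l + 1 → F i ≤ F j)
    (htop : F (2 * l + 1) = ⊤)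
    (hFE : ∀ i, 1 ≤ i → i ≤ l → F i ≤ stdFlag K n (t i))
    (hEF : ∀ i, 1 ≤ i → i ≤ l → stdFlag K n (t i) ≤ F (i + l))
    (hdimF : ∀ i, i ≤ l → Module.finrank K (F i) = r i)
    (hrmono : ∀ i j, i ≤ j → j ≤ l → r i ≤ r j)
    (hint : ∀ i j, 1 ≤ i → i ≤ l + 1 → 1 ≤ j → j ≤ l →
      min (r (i - 1)) (r j) ≤ Module.finrank K ↥(F (i - 1) ⊓ stdFlag K n (t j)))
    (hx : ∀ i, 1 ≤ i → i ≤ l + 1 → Submodule.map x (F (i + l)) ≤ F (i - 1)) :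
    ∀ i j, 1 ≤ j → j < i → i ≤ l →
      (Module.finrank K ↥(Submodule.map (stdFlag K n (t j)).mkQ
          (Submodule.map x (stdFlag K n (t i)))) : ℤ)
        ≤ (r (i - 1) : ℤ) - (r j : ℤ) :=
  stmt12_general t r x F hEF hdimF hrmono hint hx
end

section
/- Let E(n) be an n-dimensional vector space with standard flag (E(i)), let x : E(n) → E(n) be linear with x² = 0, and let 0 = t_0 < t_1 < ⋯ < t_l < t_{l+1} = n with integers 0 = r_0 ≤ r_1 ≤ ⋯ ≤ r_l = d satisfying: dim((x E(t_i) + E(t_j))/E(t_j)) ≤ r_{i−1} − r_j for all 0 ≤ j < i ≤ l+1. Suppose further V is a d-dimensional subspace with im x ⊆ V ⊆ ker x and dim(V ∩ E(t_j)) ≥ r_j for all j. Then there exists a chain of subspaces V_0 ⊆ V_1 ⊆ ⋯ ⊆ V_l = V with dim V_i = r_i, x E(t_{i+1}) ⊆ V_i ⊆ E(t_i), and dim(V_i ∩ E(t_j)) ≥ min(r_i, r_j) for all 1 ≤ i, j ≤ l. -/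
/-!
The chain is built downwards from `V_l = V`. Given `V_{i+1}`, let `U = x E(t_{i+1})`; the row
inequality for `j = i` gives `U ≤ E(t_i)`. Climb the flag inside `V_{i+1}`: at level `j`, enlarge
`Y_{j-1} + U ∩ E(t_j)` just enough to meet `E(t_j)` in dimension `r_j`. Each step adds at most
what is forced, so `dim Y_j ≤ r_k + dim (U ∩ E(t_j)) - dim (U ∩ E(t_k))` for some `k ≤ j`, and
at `j = i` the row inequalities `dim U + r_k ≤ r_i + dim (U ∩ E(t_k))` give `dim Y_i = r_i`.
-/

open Module Submodule

section stdFlag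

variable {K : Type*} [Field K] {n : ℕ}

theorem stdFlag_mono {i j : ℕ} (h : i ≤ j) : stdFlag K n i ≤ stdFlag K n j :=
  fun _ hv k hk => hv k (h.trans hk)

theorem stdFlag_zero : stdFlag K n 0 = ⊥ :=
  eq_bot_iff.2 fun _ hv => (mem_bot K).2 <| funext fun k => hv k k.val.zero_le

theorem stdFlag_of_le {i : ℕ} (h : n ≤ i) : stdFlag K n i = ⊤ :=
  eq_top_iff.2 fun _ _ k hk => absurd (h.trans hk) (not_le.2 k.isLt)

end stdFlag

namespace Submodule

variable {K V : Type*} [DivisionRing K] [AddCommGroup V] [Module K V] [FiniteDimensional K V]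

theorem exists_le_le_finrank_eq {S F : Submodule K V} (hSF : S ≤ F) {m : ℕ}
    (hS : finrank K S ≤ m) (hF : m ≤ finrank K F) :
    ∃ W, S ≤ W ∧ W ≤ F ∧ finrank K W = m := by
  induction m, hS using Nat.le_induction with
  | base => exact ⟨S, le_rfl, hSF, rfl⟩
  | succ m _ ih =>
    obtain ⟨W, hSW, hWF, hW⟩ := ih (by omega)
    obtain ⟨v, hvF, hvW⟩ := SetLike.exists_of_lt <|
      lt_of_le_of_ne hWF fun h => by rw [h] at hW; omega
    refine ⟨W ⊔ span K {v}, le_sup_of_le_left hSW,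
      sup_le hWF ((span_singleton_le_iff_mem _ _).2 hvF), ?_⟩
    rw [finrank_sup_span_singleton hvW, hW]

theorem finrank_map_mkQ_add_finrank_inf (p U : Submodule K V) :
    finrank K (map p.mkQ U) + finrank K ↥(U ⊓ p) = finrank K U := by
  have h := LinearMap.finrank_range_add_finrank_ker (p.mkQ.comp U.subtype)
  rw [LinearMap.range_comp, range_subtype, LinearMap.ker_comp, ker_mkQ] at h
  rwa [← LinearEquiv.finrank_eq (comapSubtypeEquivOfLe (inf_le_left : U ⊓ p ≤ U)),
    comap_inf, comap_subtype_self, top_inf_eq]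

end Submodule

theorem exists_descending_chain {α : Type*} [LE α] (P : ℕ → α → Prop) {l : ℕ} {a : α}
    (ha : P l a) (step : ∀ i < l, ∀ b, P (i + 1) b → ∃ c ≤ b, P i c) :
    ∃ f : ℕ → α, f l = a ∧ (∀ i ≤ l, P i (f i)) ∧ ∀ i < l, f i ≤ f (i + 1) := by
  induction l generalizing a with
  | zero =>
    exact ⟨fun _ => a, rfl, fun i hi => by rwa [Nat.le_zero.1 hi],
      fun i hi => absurd hi i.not_lt_zero⟩
  | succ l ih =>
    obtain ⟨b, hba, hb⟩ := step l l.lt_succ_self a ha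
    obtain ⟨f, hfl, hf, hchain⟩ := ih hb fun i hi => step i (by omega)
    refine ⟨fun i => if i ≤ l then f i else a, by simp, fun i hi => ?_, fun i hi => ?_⟩
    · by_cases h : i ≤ l
      · simpa [h] using hf i h
      · simpa [h, show i = l + 1 by omega] using ha
    · by_cases h : i + 1 ≤ l
      · simpa [h, show i ≤ l by omega] using hchain i h
      · simpa [h, show i = l by omega, hfl] using hba

section RowChain

variable {K V : Type*} [DivisionRing K] [AddCommGroup V] [Module K V]

/-- The field `excess` is what pins `dim Y` to `r j`, via the row inequality, once `U ≤ E j`. -/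
structure IsRowApprox (U W : Submodule K V) (E : ℕ → Submodule K V) (r : ℕ → ℕ) (j : ℕ)
    (Y : Submodule K V) : Prop where
  lower : U ⊓ E j ≤ Y
  upper : Y ≤ W ⊓ E j
  le_finrank_inf : ∀ k ≤ j, r k ≤ finrank K ↥(Y ⊓ E k)
  excess : ∃ k ≤ j, finrank K Y + finrank K ↥(U ⊓ E k) ≤ r k + finrank K ↥(U ⊓ E j)

variable {U W Y : Submodule K V} {E : ℕ → Submodule K V} {r : ℕ → ℕ} {j : ℕ}

theorem isRowApprox_zero (hE : E 0 = ⊥) (hr : r 0 = 0) : IsRowApprox U W E r 0 ⊥ where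
  lower := by simp [hE]
  upper := bot_le
  le_finrank_inf k hk := by simp [Nat.le_zero.1 hk, hr]
  excess := ⟨0, le_rfl, by simp [hr]⟩

theorem IsRowApprox.exists_succ [FiniteDimensional K V] (h : IsRowApprox U W E r j Y)
    (hE : E j ≤ E (j + 1)) (hUW : U ≤ W) (hW : r (j + 1) ≤ finrank K ↥(W ⊓ E (j + 1))) :
    ∃ Y', IsRowApprox U W E r (j + 1) Y' := by
  set S := Y ⊔ U ⊓ E (j + 1)
  have hSW : S ≤ W ⊓ E (j + 1) :=
    sup_le (h.upper.trans (inf_le_inf_left _ hE)) (inf_le_inf_right _ hUW)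
  have hYU : Y ⊓ (U ⊓ E (j + 1)) = U ⊓ E j :=
    le_antisymm
      (le_inf (inf_le_right.trans inf_le_left) (inf_le_left.trans (h.upper.trans inf_le_right)))
      (le_inf h.lower (inf_le_inf_left _ hE))
  have hS : finrank K S + finrank K ↥(U ⊓ E j) = finrank K Y + finrank K ↥(U ⊓ E (j + 1)) := by
    rw [← hYU]; exact finrank_sup_add_finrank_inf_eq _ _
  obtain ⟨Y', hSY', hY'W, hY'⟩ := exists_le_le_finrank_eq hSW (le_max_left _ (r (j + 1)))
    (max_le (finrank_mono hSW) hW)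
  refine ⟨Y', le_sup_right.trans hSY', hY'W, fun k hk => ?_, ?_⟩
  · rcases hk.lt_or_eq with hk | rfl
    · exact (h.le_finrank_inf k (by omega)).trans
        (finrank_mono (inf_le_inf_right _ (le_sup_left.trans hSY')))
    · rw [inf_eq_left.2 (hY'W.trans inf_le_right), hY']
      exact le_max_right _ _
  · obtain ⟨k, hk, hexcess⟩ := h.excess
    rcases le_total (r (j + 1)) (finrank K S) with hrS | hrS
    · exact ⟨k, by omega, by rw [hY', max_eq_left hrS]; omega⟩
    · exact ⟨j + 1, le_rfl, by rw [hY', max_eq_right hrS]⟩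

theorem exists_isRowApprox [FiniteDimensional K V] (hE0 : E 0 = ⊥) (hr0 : r 0 = 0)
    (hE : ∀ i < j, E i ≤ E (i + 1)) (hUW : U ≤ W) (hW : ∀ i ≤ j, r i ≤ finrank K ↥(W ⊓ E i)) :
    ∃ Y, IsRowApprox U W E r j Y := by
  induction j with
  | zero => exact ⟨⊥, isRowApprox_zero hE0 hr0⟩
  | succ j ih =>
    obtain ⟨Y, hY⟩ := ih (fun i hi => hE i (by omega)) fun i hi => hW i (by omega)
    exact hY.exists_succ (hE j j.lt_succ_self) hUW (hW (j + 1) le_rfl)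

theorem IsRowApprox.finrank_eq [FiniteDimensional K V] (h : IsRowApprox U W E r j Y)
    (hUE : U ≤ E j) (hrow : ∀ k ≤ j, finrank K U + r k ≤ r j + finrank K ↥(U ⊓ E k)) :
    finrank K Y = r j := by
  obtain ⟨k, hk, hexcess⟩ := h.excess
  rw [inf_eq_left.2 hUE] at hexcess
  have := hrow k hk
  have := h.le_finrank_inf j le_rfl
  have := finrank_mono (inf_le_left : Y ⊓ E j ≤ Y)
  omega

variable {x : V →ₗ[K] V} {l i : ℕ}

/-- The conditions on the term `V_i` of the chain, `E i` standing for `E(t_i)`. -/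
structure IsRowTerm (x : V →ₗ[K] V) (E : ℕ → Submodule K V) (r : ℕ → ℕ) (i : ℕ)
    (W : Submodule K V) : Prop where
  finrank_eq : finrank K W = r i
  map_le : map x (E (i + 1)) ≤ W
  le_flag : W ≤ E i
  le_finrank_inf : ∀ j ≤ i, r j ≤ finrank K ↥(W ⊓ E j)

theorem IsRowTerm.exists_le [FiniteDimensional K V] (hE0 : E 0 = ⊥) (hr0 : r 0 = 0)
    (hE : ∀ i j, i ≤ j → j ≤ l + 1 → E i ≤ E j)
    (hrow : ∀ j i, j < i → i ≤ l + 1 →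
      (finrank K ↥(map (E j).mkQ (map x (E i))) : ℤ) ≤ (r (i - 1) : ℤ) - (r j : ℤ))
    (hi : i < l) (h : IsRowTerm x E r (i + 1) W) : ∃ W' ≤ W, IsRowTerm x E r i W' := by
  set U := map x (E (i + 1))
  have hrowU : ∀ k ≤ i, finrank K U + r k ≤ r i + finrank K ↥(U ⊓ E k) := fun k hk => by
    have : (finrank K ↥(map (E k).mkQ U) : ℤ) ≤ r i - r k := by
      simpa using hrow k (i + 1) (by omega) (by omega)
    have := finrank_map_mkQ_add_finrank_inf (E k) U
    omega
  have hUE : U ≤ E i := inf_eq_left.1 <|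
    eq_of_le_of_finrank_le inf_le_left (by have := hrowU i le_rfl; omega)
  have hUW : U ≤ W := (map_mono (hE _ _ (i + 1).le_succ (by omega))).trans h.map_le
  obtain ⟨Y, hY⟩ := exists_isRowApprox (W := W) (j := i) hE0 hr0
    (fun k hk => hE k (k + 1) k.le_succ (by omega)) hUW fun k hk => h.le_finrank_inf k (by omega)
  exact ⟨Y, hY.upper.trans inf_le_left, hY.finrank_eq hUE hrowU,
    (inf_eq_left.2 hUE).symm.le.trans hY.lower, hY.upper.trans inf_le_right, hY.le_finrank_inf⟩

theorem IsRowTerm.min_le_finrank_inf {j : ℕ} (h : IsRowTerm x E r i W)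
    (hE : i ≤ j → E i ≤ E j) :
    min (r i) (r j) ≤ finrank K ↥(W ⊓ E j) := by
  rcases le_total j i with hji | hij
  · exact (min_le_right _ _).trans (h.le_finrank_inf j hji)
  · rw [inf_eq_left.2 (h.le_flag.trans (hE hij)), h.finrank_eq]
    exact min_le_left _ _

theorem exists_isRowTerm_chain [FiniteDimensional K V] (hE0 : E 0 = ⊥) (hEtop : E (l + 1) = ⊤)
    (hE : ∀ i j, i ≤ j → j ≤ l + 1 → E i ≤ E j) (hr0 : r 0 = 0)
    (hrow : ∀ j i, j < i → i ≤ l + 1 →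
      (finrank K ↥(map (E j).mkQ (map x (E i))) : ℤ) ≤ (r (i - 1) : ℤ) - (r j : ℤ))
    (hW : finrank K W = r l) (hrange : LinearMap.range x ≤ W)
    (hWE : ∀ j ≤ l, r j ≤ finrank K ↥(W ⊓ E j)) :
    ∃ Vc : ℕ → Submodule K V, Vc l = W ∧ (∀ i ≤ l, IsRowTerm x E r i (Vc i)) ∧
      ∀ i < l, Vc i ≤ Vc (i + 1) := by
  have hWl : W ≤ E l := inf_eq_left.1 <|
    eq_of_le_of_finrank_le inf_le_left (by have := hWE l le_rfl; omega)
  refine exists_descending_chain _ ⟨hW, ?_, hWl, hWE⟩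
    fun i hi _ h => h.exists_le hE0 hr0 hE hrow hi
  rwa [hEtop, Submodule.map_top]

end RowChain

theorem stmt19_general {K : Type*} [Field K] {n l d : ℕ} (t r : ℕ → ℕ)
    (x : (Fin n → K) →ₗ[K] (Fin n → K))
    (ht0 : t 0 = 0) (htn : t (l + 1) = n)
    (htmono : ∀ i j, i < j → j ≤ l + 1 → t i < t j)
    (hr0 : r 0 = 0) (hrl : r l = d)
    (hrow : ∀ j i, j < i → i ≤ l + 1 →
      (Module.finrank K ↥(Submodule.map (stdFlag K n (t j)).mkQ
          (Submodule.map x (stdFlag K n (t i)))) : ℤ)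
        ≤ (r (i - 1) : ℤ) - (r j : ℤ))
    (V : Submodule K (Fin n → K)) (hV : Module.finrank K V = d)
    (hrange : LinearMap.range x ≤ V)
    (hVE : ∀ j, j ≤ l → r j ≤ Module.finrank K ↥(V ⊓ stdFlag K n (t j))) :
    ∃ Vc : ℕ → Submodule K (Fin n → K),
      (∀ i, i < l → Vc i ≤ Vc (i + 1)) ∧
      Vc l = V ∧
      (∀ i, i ≤ l → Module.finrank K (Vc i) = r i ∧
        Submodule.map x (stdFlag K n (t (i + 1))) ≤ Vc i ∧
        Vc i ≤ stdFlag K n (t i)) ∧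
      (∀ i j, 1 ≤ i → i ≤ l → 1 ≤ j → j ≤ l →
        min (r i) (r j) ≤ Module.finrank K ↥(Vc i ⊓ stdFlag K n (t j))) := by
  have hE : ∀ i j, i ≤ j → j ≤ l + 1 → stdFlag K n (t i) ≤ stdFlag K n (t j) := fun i j hij hj =>
    stdFlag_mono <| hij.lt_or_eq.elim (fun h => (htmono i j h hj).le) fun h => h ▸ le_rfl
  obtain ⟨Vc, hVl, hVc, hchain⟩ := exists_isRowTerm_chain (E := fun i => stdFlag K n (t i))
    (by simp only [ht0, stdFlag_zero]) (stdFlag_of_le htn.ge) hE hr0 hrow (hV.trans hrl.symm)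
    hrange hVE
  refine ⟨Vc, hchain, hVl,
    fun i hi => ⟨(hVc i hi).finrank_eq, (hVc i hi).map_le, (hVc i hi).le_flag⟩,
    fun i j _ hi _ hj => (hVc i hi).min_le_finrank_inf fun hij => hE i j hij (by omega)⟩

/-- Proposition rows: `x² = 0`, `0 = t_0 < t_1 < ⋯ < t_l <
t_{l+1} = n`, `0 = r_0 ≤ r_1 ≤ ⋯ ≤ r_l = d`, with the 'row' inequalities
`dim((x E(t_i) + E(t_j))/E(t_j)) ≤ r_{i−1} − r_j` for `0 ≤ j < i ≤ l+1`, and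
`V` a `d`-dimensional subspace with `im x ⊆ V ⊆ ker x` and
`dim(V ∩ E(t_j)) ≥ r_j` for all `j ≤ l`.  Then there is a chain
`V_0 ⊆ ⋯ ⊆ V_l = V` with `dim V_i = r_i`, `x E(t_{i+1}) ⊆ V_i ⊆ E(t_i)`, and
`dim(V_i ∩ E(t_j)) ≥ min(r_i, r_j)` for all `1 ≤ i, j ≤ l`. -/
theorem stmt19 {K : Type*} [Field K] {n l d : ℕ} (t r : ℕ → ℕ)
    (x : (Fin n → K) →ₗ[K] (Fin n → K)) (hx2 : x ∘ₗ x = 0)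
    (ht0 : t 0 = 0) (htn : t (l + 1) = n)
    (htmono : ∀ i j, i < j → j ≤ l + 1 → t i < t j)
    (hr0 : r 0 = 0) (hrl : r l = d)
    (hrmono : ∀ i j, i ≤ j → j ≤ l → r i ≤ r j)
    (hrow : ∀ j i, j < i → i ≤ l + 1 →
      (Module.finrank K ↥(Submodule.map (stdFlag K n (t j)).mkQ
          (Submodule.map x (stdFlag K n (t i)))) : ℤ)
        ≤ (r (i - 1) : ℤ) - (r j : ℤ))
    (V : Submodule K (Fin n → K)) (hV : Module.finrank K V = d)
    (hrange : LinearMap.range x ≤ V) (hker : V ≤ LinearMap.ker x)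
    (hVE : ∀ j, j ≤ l → r j ≤ Module.finrank K ↥(V ⊓ stdFlag K n (t j))) :
    ∃ Vc : ℕ → Submodule K (Fin n → K),
      (∀ i, i < l → Vc i ≤ Vc (i + 1)) ∧
      Vc l = V ∧
      (∀ i, i ≤ l → Module.finrank K (Vc i) = r i ∧
        Submodule.map x (stdFlag K n (t (i + 1))) ≤ Vc i ∧
        Vc i ≤ stdFlag K n (t i)) ∧
      (∀ i j, 1 ≤ i → i ≤ l → 1 ≤ j → j ≤ l →
        min (r i) (r j) ≤ Module.finrank K ↥(Vc i ⊓ stdFlag K n (t j))) :=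
  stmt19_general t r x ht0 htn htmono hr0 hrl hrow V hV hrange hVE
end
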